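/- Suppose f : R^d → R is third-order smooth with constant L_3 (the third-derivative tensor is L_3-Lipschitz in the induced tensor norm). Then the map x ↦ ∇tr(∇^2 f(x)) is Lipschitz with constant √2 d^{3/2} L_3; consequently ||∇tr(∇^2 f(y)) − ∇tr(∇^2 f(z))||^2 ≤ 2 d^3 L_3^2 ||y − z||^2 for all y, z. -/

import Mathlib

/-- Trace of the Hessian of `f` at `x`, `Σ_i ∂²f/∂x_i²`. -/
noncomputable def hessTrace {d : ℕ} (f : EuclideanSpace ℝ (Fin d) → ℝ)
    (x : EuclideanSpace ℝ (Fin d)) : ℝ :=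
  ∑ i, iteratedFDeriv ℝ 2 f x ![EuclideanSpace.single i 1, EuclideanSpace.single i 1]

/-!
Put `B = ∇³f(y) − ∇³f(z)`: a symmetric trilinear form with `|B[w,w,w]| ≤ c := L₃‖y − z‖` on the
unit ball, hence `|B[u,u,u]| ≤ c‖u‖³`. For orthonormal `a, b` the polarization identity
`B[a+b]³ + B[a−b]³ = 2B[a,a,a] + 6B[a,b,b]` and `‖a ± b‖ = √2` give `|B[a,b,b]| ≤ √2 c`.
The gradient difference is `v ↦ Σᵢ B[v,eᵢ,eᵢ]`; expanding `v` in the basis and using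
`Σₖ |vₖ| ≤ √d ‖v‖` bounds it by `d · √d · √2 c ‖v‖`.
-/

open scoped RealInnerProductSpace

theorem Real.rpow_three_div_two_eq_mul_sqrt {x : ℝ} (hx : 0 ≤ x) : x ^ ((3 : ℝ) / 2) = x * √x := by
  rw [show (3 : ℝ) / 2 = 1 + 1 / 2 by norm_num, Real.rpow_add' hx (by norm_num), Real.rpow_one,
    Real.sqrt_eq_rpow]

theorem OrthonormalBasis.sum_abs_inner_le {ι E : Type*} [Fintype ι] [NormedAddCommGroup E]
    [InnerProductSpace ℝ E] (b : OrthonormalBasis ι ℝ E) (v : E) :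
    ∑ k, |⟪b k, v⟫| ≤ √(Fintype.card ι) * ‖v‖ := by
  have hsq : (∑ k, |⟪b k, v⟫|) ^ 2 ≤ Fintype.card ι * ‖v‖ ^ 2 :=
    calc (∑ k, |⟪b k, v⟫|) ^ 2 ≤ Fintype.card ι * ∑ k, |⟪b k, v⟫| ^ 2 := by
          simpa using sq_sum_le_card_mul_sum_sq (s := Finset.univ) (f := fun k => |⟪b k, v⟫|)
      _ = Fintype.card ι * ‖v‖ ^ 2 := by
          simp_rw [← Real.norm_eq_abs, b.sum_sq_norm_inner_right]
  rw [← Real.sqrt_sq (norm_nonneg v), ← Real.sqrt_mul (by positivity)]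
  exact Real.le_sqrt_of_sq_le hsq

namespace ContinuousLinearMap

section Polarization

variable {𝕜 E F : Type*} [NontriviallyNormedField 𝕜] [NormedAddCommGroup E] [NormedSpace 𝕜 E]
  [NormedAddCommGroup F] [NormedSpace 𝕜 F] {B : E →L[𝕜] E →L[𝕜] E →L[𝕜] F}

theorem cube_add_add_cube_sub (h₁₂ : ∀ a b, B a b = B b a) (h₂₃ : ∀ a b c, B a b c = B a c b)
    (a b : E) :
    B (a + b) (a + b) (a + b) + B (a - b) (a - b) (a - b) =
      (2 : 𝕜) • B a a a + (6 : 𝕜) • B a b b := by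
  have hbab : B b a b = B a b b := by rw [h₁₂]
  have hbba : B b b a = B a b b := by rw [h₂₃, h₁₂]
  simp only [map_add, map_sub, add_apply, sub_apply, hbab, hbba]
  module

end Polarization

section CubeBound

variable {E : Type*} [NormedAddCommGroup E] [NormedSpace ℝ E] {B : E →L[ℝ] E →L[ℝ] E →L[ℝ] ℝ}
  {c : ℝ}

theorem nonneg_of_forall_abs_cube_le (hB : ∀ w : E, ‖w‖ ≤ 1 → |B w w w| ≤ c) : 0 ≤ c := by
  simpa using hB 0 (by simp)

theorem abs_cube_le_mul_norm_pow (hB : ∀ w : E, ‖w‖ ≤ 1 → |B w w w| ≤ c) (u : E) :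
    |B u u u| ≤ c * ‖u‖ ^ 3 := by
  rcases eq_or_ne u 0 with rfl | hu
  · simp
  have hnorm : ‖u‖ ≠ 0 := norm_ne_zero_iff.mpr hu
  have hcube : B u u u = ‖u‖ ^ 3 * B (‖u‖⁻¹ • u) (‖u‖⁻¹ • u) (‖u‖⁻¹ • u) := by
    simp only [map_smul, smul_apply, smul_eq_mul]
    field_simp
  rw [hcube, abs_mul, abs_of_nonneg (by positivity), mul_comm c]
  gcongr
  exact hB _ (by rw [norm_smul, norm_inv, norm_norm, inv_mul_cancel₀ hnorm])

end CubeBound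

section Orthonormal

variable {E : Type*} [NormedAddCommGroup E] [InnerProductSpace ℝ E]
  {B : E →L[ℝ] E →L[ℝ] E →L[ℝ] ℝ} {c : ℝ}

theorem abs_apply_orthonormal_le (h₁₂ : ∀ a b, B a b = B b a)
    (h₂₃ : ∀ a b c, B a b c = B a c b) (hB : ∀ w : E, ‖w‖ ≤ 1 → |B w w w| ≤ c)
    {ι : Type*} {e : ι → E} (he : Orthonormal ℝ e) (k i : ι) :
    |B (e k) (e i) (e i)| ≤ √2 * c := by
  have hc : c ≤ √2 * c :=
    le_mul_of_one_le_left (nonneg_of_forall_abs_cube_le hB) (by simp [Real.one_le_sqrt])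
  by_cases hki : k = i
  · subst hki
    exact (hB _ (he.1 k).le).trans hc
  have hcube : ∀ u : E, ‖u‖ ^ 2 = 2 → ‖u‖ ^ 3 = 2 * √2 := fun u hu => by
    rw [pow_succ, hu, ← Real.sqrt_sq (norm_nonneg u), hu]
  have hP := abs_cube_le_mul_norm_pow hB (e k + e i)
  have hM := abs_cube_le_mul_norm_pow hB (e k - e i)
  rw [hcube _ (by rw [norm_add_sq_real, he.2 hki, he.1 k, he.1 i]; norm_num)] at hP
  rw [hcube _ (by rw [norm_sub_sq_real, he.2 hki, he.1 k, he.1 i]; norm_num)] at hM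
  have hA := hB (e k) (he.1 k).le
  have hpol := cube_add_add_cube_sub h₁₂ h₂₃ (e k) (e i)
  simp only [smul_eq_mul] at hpol
  rw [abs_le] at hP hM hA ⊢
  constructor <;> linarith

theorem opNorm_le_of_apply_eq_sum_basis {ι : Type*} [Fintype ι] (b : OrthonormalBasis ι ℝ E)
    (h₁₂ : ∀ a b, B a b = B b a) (h₂₃ : ∀ a b c, B a b c = B a c b)
    (hB : ∀ w : E, ‖w‖ ≤ 1 → |B w w w| ≤ c) {L : E →L[ℝ] ℝ}
    (hL : ∀ v, L v = ∑ i, B v (b i) (b i)) :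
    ‖L‖ ≤ √2 * (Fintype.card ι : ℝ) ^ ((3 : ℝ) / 2) * c := by
  have hc := nonneg_of_forall_abs_cube_le hB
  refine opNorm_le_bound _ (by positivity) fun v => ?_
  have hentry : ∀ i, |B v (b i) (b i)| ≤ √2 * c * (√(Fintype.card ι) * ‖v‖) := fun i =>
    calc |B v (b i) (b i)| = |∑ k, ⟪b k, v⟫ * B (b k) (b i) (b i)| := by
          conv_lhs => rw [← b.sum_repr' v]
          simp [map_sum, sum_apply, map_smul]
      _ ≤ ∑ k, |⟪b k, v⟫| * (√2 * c) := by
          refine (Finset.abs_sum_le_sum_abs _ _).trans (Finset.sum_le_sum fun k _ => ?_)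
          rw [abs_mul]
          gcongr
          exact abs_apply_orthonormal_le h₁₂ h₂₃ hB b.orthonormal k i
      _ ≤ √2 * c * (√(Fintype.card ι) * ‖v‖) := by
          rw [← Finset.sum_mul, mul_comm]
          gcongr
          exact b.sum_abs_inner_le v
  calc ‖L v‖ = |∑ i, B v (b i) (b i)| := by rw [hL, Real.norm_eq_abs]
    _ ≤ ∑ i, |B v (b i) (b i)| := Finset.abs_sum_le_sum_abs _ _
    _ ≤ ∑ _i : ι, √2 * c * (√(Fintype.card ι) * ‖v‖) := Finset.sum_le_sum fun i _ => hentry i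
    _ = √2 * (Fintype.card ι : ℝ) ^ ((3 : ℝ) / 2) * c * ‖v‖ := by
          rw [Real.rpow_three_div_two_eq_mul_sqrt (Nat.cast_nonneg _), Finset.sum_const,
            Finset.card_univ, nsmul_eq_mul]
          ring

end Orthonormal

end ContinuousLinearMap

section ThirdDerivative

variable {𝕜 E F : Type*} [RCLike 𝕜] [NormedAddCommGroup E] [NormedSpace 𝕜 E]
  [NormedAddCommGroup F] [NormedSpace 𝕜 F] {f : E → F}

theorem iteratedFDeriv_three_apply (f : E → F) (x : E) (m : Fin 3 → E) :
    iteratedFDeriv 𝕜 3 f x m = fderiv 𝕜 (fderiv 𝕜 (fderiv 𝕜 f)) x (m 0) (m 1) (m 2) := by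
  rw [iteratedFDeriv_succ_apply_right, iteratedFDeriv_two_apply]
  rfl

theorem ContDiff.hasFDerivAt_fderiv_fderiv_apply (hf : ContDiff 𝕜 3 f) (x b c : E) :
    HasFDerivAt (fun y => fderiv 𝕜 (fderiv 𝕜 f) y b c)
      (((fderiv 𝕜 (fderiv 𝕜 (fderiv 𝕜 f)) x).flip b).flip c) x := by
  have hD2 : HasFDerivAt (fderiv 𝕜 (fderiv 𝕜 f)) (fderiv 𝕜 (fderiv 𝕜 (fderiv 𝕜 f)) x) x :=
    ((hf.fderiv_right (m := 2) (by norm_num)).fderiv_right (m := 1) (by norm_num)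
      |>.differentiable one_ne_zero x).hasFDerivAt
  convert (hD2.clm_apply (hasFDerivAt_const b x)).clm_apply (hasFDerivAt_const c x) using 1
  ext a
  simp

theorem ContDiff.fderiv_fderiv_fderiv_comm₁₂ (hf : ContDiff 𝕜 3 f) (x a b : E) :
    fderiv 𝕜 (fderiv 𝕜 (fderiv 𝕜 f)) x a b = fderiv 𝕜 (fderiv 𝕜 (fderiv 𝕜 f)) x b a :=
  (hf.fderiv_right (m := 2) (by norm_num)).contDiffAt.isSymmSndFDerivAt (by simp) a b

theorem ContDiff.fderiv_fderiv_fderiv_comm₂₃ (hf : ContDiff 𝕜 3 f) (x a b c : E) :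
    fderiv 𝕜 (fderiv 𝕜 (fderiv 𝕜 f)) x a b c = fderiv 𝕜 (fderiv 𝕜 (fderiv 𝕜 f)) x a c b := by
  have hsymm : (fun y => fderiv 𝕜 (fderiv 𝕜 f) y b c) = fun y => fderiv 𝕜 (fderiv 𝕜 f) y c b :=
    funext fun y => hf.contDiffAt.isSymmSndFDerivAt (by simp; norm_num) b c
  calc fderiv 𝕜 (fderiv 𝕜 (fderiv 𝕜 f)) x a b c
      = fderiv 𝕜 (fun y => fderiv 𝕜 (fderiv 𝕜 f) y b c) x a := by
        simp [(hf.hasFDerivAt_fderiv_fderiv_apply x b c).fderiv]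
    _ = fderiv 𝕜 (fun y => fderiv 𝕜 (fderiv 𝕜 f) y c b) x a := by rw [hsymm]
    _ = fderiv 𝕜 (fderiv 𝕜 (fderiv 𝕜 f)) x a c b := by
        simp [(hf.hasFDerivAt_fderiv_fderiv_apply x c b).fderiv]

end ThirdDerivative

theorem fderiv_hessTrace_apply {d : ℕ} {f : EuclideanSpace ℝ (Fin d) → ℝ} (hf : ContDiff ℝ 3 f)
    (x v : EuclideanSpace ℝ (Fin d)) :
    fderiv ℝ (hessTrace f) x v = ∑ i, fderiv ℝ (fderiv ℝ (fderiv ℝ f)) x v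
      (EuclideanSpace.single i 1) (EuclideanSpace.single i 1) := by
  have hsum : hessTrace f = fun y => ∑ i, fderiv ℝ (fderiv ℝ f) y
      (EuclideanSpace.single i 1) (EuclideanSpace.single i 1) := by
    ext y
    simp [hessTrace, iteratedFDeriv_two_apply]
  rw [hsum, (HasFDerivAt.fun_sum fun i _ => hf.hasFDerivAt_fderiv_fderiv_apply x _ _).fderiv]
  simp

theorem grad_hessTrace_lipschitz (d : ℕ) (f : EuclideanSpace ℝ (Fin d) → ℝ) (L3 : ℝ)
    (hf : ContDiff ℝ 3 f)
    (hL3 : ∀ y z : EuclideanSpace ℝ (Fin d), ∀ w : EuclideanSpace ℝ (Fin d), ‖w‖ ≤ 1 →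
      |iteratedFDeriv ℝ 3 f y ![w, w, w] - iteratedFDeriv ℝ 3 f z ![w, w, w]|
        ≤ L3 * ‖y - z‖) :
    ∀ y z : EuclideanSpace ℝ (Fin d),
      ‖fderiv ℝ (hessTrace f) y - fderiv ℝ (hessTrace f) z‖
          ≤ Real.sqrt 2 * (d : ℝ) ^ ((3 : ℝ) / 2) * L3 * ‖y - z‖ ∧
      ‖fderiv ℝ (hessTrace f) y - fderiv ℝ (hessTrace f) z‖ ^ 2
          ≤ 2 * (d : ℝ) ^ 3 * L3 ^ 2 * ‖y - z‖ ^ 2 := by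
  intro y z
  set B := fderiv ℝ (fderiv ℝ (fderiv ℝ f)) y - fderiv ℝ (fderiv ℝ (fderiv ℝ f)) z
  have h₁₂ : ∀ a b, B a b = B b a := fun a b => by
    simp only [B, sub_apply, hf.fderiv_fderiv_fderiv_comm₁₂ _ a b]
  have h₂₃ : ∀ a b c, B a b c = B a c b := fun a b c => by
    simp only [B, sub_apply, hf.fderiv_fderiv_fderiv_comm₂₃ _ a b c]
  have hdiag : ∀ w, ‖w‖ ≤ 1 → |B w w w| ≤ L3 * ‖y - z‖ := fun w hw => by
    simpa [B, iteratedFDeriv_three_apply] using hL3 y z w hw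
  have hgrad : ∀ v, (fderiv ℝ (hessTrace f) y - fderiv ℝ (hessTrace f) z) v =
      ∑ i, B v (EuclideanSpace.basisFun (Fin d) ℝ i) (EuclideanSpace.basisFun (Fin d) ℝ i) :=
    fun v => by simp [B, fderiv_hessTrace_apply hf, Finset.sum_sub_distrib]
  have hnorm := ContinuousLinearMap.opNorm_le_of_apply_eq_sum_basis _ h₁₂ h₂₃ hdiag hgrad
  rw [Fintype.card_fin, ← mul_assoc] at hnorm
  refine ⟨hnorm, ?_⟩
  calc ‖fderiv ℝ (hessTrace f) y - fderiv ℝ (hessTrace f) z‖ ^ 2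
      ≤ (√2 * (d : ℝ) ^ ((3 : ℝ) / 2) * L3 * ‖y - z‖) ^ 2 :=
        pow_le_pow_left₀ (norm_nonneg _) hnorm 2
    _ = 2 * (d : ℝ) ^ 3 * L3 ^ 2 * ‖y - z‖ ^ 2 := by
        rw [mul_pow, mul_pow, mul_pow, Real.sq_sqrt zero_le_two, ← Real.rpow_natCast _ 2,
          ← Real.rpow_mul (Nat.cast_nonneg d)]
        norm_num
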